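/- arXiv:1505.04893 — 3 statements merged into one kernel-verified Lean document; each statement's English description precedes it below -/
import Mathlib

section
/- Let d, m ≥ 1, let s < T, p ∈ (1,2], ν₀ > 0, σ > 0, let ξ : (s,T) → (0,∞) and let H ≥ 0. On (s,T)×ℝ^d let Q(t,x) = [q_{ij}(t,x)] be a symmetric real d×d matrix with minimum eigenvalue λ_Q(t,x) ≥ ν₀, with q_{ij} continuous and continuously differentiable in x; let B_i(t,x) = b_i(t,x) I_m + B̃_i(t,x), where b_i is scalar and the m×m matrix B̃_i satisfies |(B̃_i)_{jk}(t,x)| ≤ ξ(t) λ_Q(t,x)^σ for all entries; let C(t,x) be a continuous symmetric m×m matrix; and assume Λ_C(t,x) + (d m² ξ(t)²/(4(p−1))) λ_Q(t,x)^{2σ−1} ≤ H for all (t,x) ∈ (s,T)×ℝ^d. If u ∈ C^{1,2}((s,T)×ℝ^d; ℝ^m) satisfies D_t u = ∑_{i,j=1}^d D_i(q_{ij} D_j u) + ∑_{i=1}^d B_i D_i u + C u pointwise on (s,T)×ℝ^d, then for every ε > 0 the scalar function w = (|u|² + ε)^{p/2} satisfies D_t w ≤ ∑_{i,j=1}^d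 D_i(q_{ij} D_j w) + ∑_{i=1}^d b_i D_i w + p H w pointwise on (s,T)×ℝ^d. -/
open MeasureTheory Set
open scoped BigOperators

/-- Partial derivative in the `i`-th coordinate direction. -/
noncomputable def pd {d : ℕ} {F : Type*} [NormedAddCommGroup F] [NormedSpace ℝ F]
    (f : EuclideanSpace ℝ (Fin d) → F) (x : EuclideanSpace ℝ (Fin d)) (i : Fin d) : F :=
  fderiv ℝ f x (EuclideanSpace.single i 1)

/-- `lam` is the minimum eigenvalue of the symmetric matrix `M` (via the Rayleigh quotient). -/
def IsMinEigen {n : ℕ} (M : Matrix (Fin n) (Fin n) ℝ) (lam : ℝ) : Prop :=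
  (∀ w : Fin n → ℝ, lam * ∑ k, (w k) ^ 2 ≤ ∑ k, ∑ l, M k l * w k * w l) ∧
    ∃ w : Fin n → ℝ, w ≠ 0 ∧ (∑ k, ∑ l, M k l * w k * w l) = lam * ∑ k, (w k) ^ 2

/-- `lam` is the maximum eigenvalue of the symmetric matrix `M` (via the Rayleigh quotient). -/
def IsMaxEigen {n : ℕ} (M : Matrix (Fin n) (Fin n) ℝ) (lam : ℝ) : Prop :=
  (∀ w : Fin n → ℝ, (∑ k, ∑ l, M k l * w k * w l) ≤ lam * ∑ k, (w k) ^ 2) ∧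
    ∃ w : Fin n → ℝ, w ≠ 0 ∧ (∑ k, ∑ l, M k l * w k * w l) = lam * ∑ k, (w k) ^ 2





section helpers
variable {d : ℕ}

lemma pd_mul (f g : EuclideanSpace ℝ (Fin d) → ℝ) (x : EuclideanSpace ℝ (Fin d)) (i : Fin d)
    (hf : DifferentiableAt ℝ f x) (hg : DifferentiableAt ℝ g x) :
    pd (fun y => f y * g y) x i = pd f x i * g x + f x * pd g x i := by
  unfold pd
  rw [fderiv_fun_mul hf hg]
  simp [ContinuousLinearMap.add_apply, ContinuousLinearMap.smul_apply]
  ring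

lemma pd_sum {ι : Type*} (s : Finset ι) (f : ι → EuclideanSpace ℝ (Fin d) → ℝ)
    (x : EuclideanSpace ℝ (Fin d)) (i : Fin d)
    (hf : ∀ j ∈ s, DifferentiableAt ℝ (f j) x) :
    pd (fun y => ∑ j ∈ s, f j y) x i = ∑ j ∈ s, pd (f j) x i := by
  unfold pd
  rw [fderiv_fun_sum hf]
  simp

lemma pd_const_mul (c : ℝ) (f : EuclideanSpace ℝ (Fin d) → ℝ) (x : EuclideanSpace ℝ (Fin d))
    (i : Fin d) (hf : DifferentiableAt ℝ f x) :
    pd (fun y => c * f y) x i = c * pd f x i := by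
  unfold pd
  rw [fderiv_const_mul hf]
  simp

lemma hasFDerivAt_rpow_comp {f : EuclideanSpace ℝ (Fin d) → ℝ} {f' : EuclideanSpace ℝ (Fin d) →L[ℝ] ℝ}
    {x : EuclideanSpace ℝ (Fin d)} (hf : HasFDerivAt f f' x) (hpos : 0 < f x) (c : ℝ) :
    HasFDerivAt (fun y => f y ^ c) ((c * f x ^ (c - 1)) • f') x :=
  (Real.hasStrictDerivAt_rpow_const (Or.inl hpos.ne')).hasDerivAt.comp_hasFDerivAt x hf

end helpers

section core

/-- psd trace bound: if the symmetric matrix M is psd then uᵀMu ≤ |u|² tr M. -/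
lemma psd_trace {m : ℕ} (M : Fin m → Fin m → ℝ)
    (hsym : ∀ k l, M k l = M l k)
    (hpsd : ∀ c : Fin m → ℝ, 0 ≤ ∑ k, ∑ l, c k * c l * M k l) (u : Fin m → ℝ) :
    ∑ k, ∑ l, u k * u l * M k l ≤ (∑ k, (u k) ^ 2) * ∑ k, M k k := by
  have hdiag : ∀ k, 0 ≤ M k k := by
    intro k
    have := hpsd (fun j => if j = k then 1 else 0)
    simpa using this
  have hCS : ∀ k l, M k l ^ 2 ≤ M k k * M l l := by
    intro k l
    rcases eq_or_ne k l with rfl | hkl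
    · rw [sq]
    · have hq : ∀ s : ℝ, 0 ≤ M k k * (s * s) + (2 * M k l) * s + M l l := by
        intro s
        have := hpsd (fun j => (if j = k then s else 0) + if j = l then 1 else 0)
        have e : ∑ k', ∑ l', ((if k' = k then s else 0) + if k' = l then 1 else 0) *
            ((if l' = k then s else 0) + if l' = l then 1 else 0) * M k' l'
            = M k k * (s * s) + (2 * M k l) * s + M l l := by
          simp only [add_mul, mul_add, Finset.sum_add_distrib, ite_mul, mul_ite, zero_mul,
            mul_zero, zero_add, add_zero, one_mul, mul_one]
          simp [Finset.sum_add_distrib, Finset.sum_ite_eq', hkl, hkl.symm, hsym k l]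
          ring
        rw [e] at this
        exact this
      have := discrim_le_zero hq
      rw [discrim] at this
      nlinarith [this]
  have habs : ∀ k l, u k * u l * M k l ≤ (|u k| * Real.sqrt (M k k)) * (|u l| * Real.sqrt (M l l)) := by
    intro k l
    have h1 : u k * u l * M k l ≤ |u k| * |u l| * |M k l| := by
      calc u k * u l * M k l ≤ |u k * u l * M k l| := le_abs_self _
      _ = |u k| * |u l| * |M k l| := by rw [abs_mul, abs_mul]
    have h2 : |M k l| ≤ Real.sqrt (M k k) * Real.sqrt (M l l) := by
      rw [← Real.sqrt_mul_self (abs_nonneg (M k l)), ← Real.sqrt_mul (hdiag k)]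
      exact Real.sqrt_le_sqrt (by nlinarith [hCS k l, abs_mul_abs_self (M k l)])
    calc u k * u l * M k l ≤ |u k| * |u l| * |M k l| := h1
    _ ≤ |u k| * |u l| * (Real.sqrt (M k k) * Real.sqrt (M l l)) := by
        apply mul_le_mul_of_nonneg_left h2 (by positivity)
    _ = (|u k| * Real.sqrt (M k k)) * (|u l| * Real.sqrt (M l l)) := by ring
  calc ∑ k, ∑ l, u k * u l * M k l
      ≤ ∑ k, ∑ l, (|u k| * Real.sqrt (M k k)) * (|u l| * Real.sqrt (M l l)) :=
        Finset.sum_le_sum fun k _ => Finset.sum_le_sum fun l _ => habs k l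
    _ = (∑ k, |u k| * Real.sqrt (M k k)) ^ 2 := by
        rw [sq, Finset.sum_mul]
        exact Finset.sum_congr rfl fun k _ => by rw [Finset.mul_sum]
    _ ≤ (∑ k, |u k| ^ 2) * ∑ k, Real.sqrt (M k k) ^ 2 :=
        Finset.sum_mul_sq_le_sq_mul_sq _ _ _
    _ = (∑ k, (u k) ^ 2) * ∑ k, M k k := by
        congr 1
        · exact Finset.sum_congr rfl fun k _ => sq_abs _
        · exact Finset.sum_congr rfl fun k _ => Real.sq_sqrt (hdiag k)

end core


lemma sum_comm3 {α β γ : Type*} [Fintype α] [Fintype β] [Fintype γ] (F : α → β → γ → ℝ) :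
    ∑ k : γ, ∑ i : α, ∑ j : β, F i j k = ∑ i : α, ∑ j : β, ∑ k : γ, F i j k := by
  rw [Finset.sum_comm]
  exact Finset.sum_congr rfl fun i _ => Finset.sum_comm

lemma sum_comm4 {α β γ δ : Type*} [Fintype α] [Fintype β] [Fintype γ] [Fintype δ]
    (F : α → β → γ → δ → ℝ) :
    ∑ i : α, ∑ j : β, ∑ k : γ, ∑ l : δ, F i j k l
      = ∑ k : γ, ∑ l : δ, ∑ i : α, ∑ j : β, F i j k l := by
  calc ∑ i : α, ∑ j : β, ∑ k : γ, ∑ l : δ, F i j k l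
      = ∑ i : α, ∑ k : γ, ∑ j : β, ∑ l : δ, F i j k l :=
        Finset.sum_congr rfl fun i _ => Finset.sum_comm
    _ = ∑ k : γ, ∑ i : α, ∑ j : β, ∑ l : δ, F i j k l := Finset.sum_comm
    _ = ∑ k : γ, ∑ i : α, ∑ l : δ, ∑ j : β, F i j k l :=
        Finset.sum_congr rfl fun k _ => Finset.sum_congr rfl fun i _ => Finset.sum_comm
    _ = ∑ k : γ, ∑ l : δ, ∑ i : α, ∑ j : β, F i j k l :=
        Finset.sum_congr rfl fun k _ => Finset.sum_comm

set_option maxHeartbeats 1000000 in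
lemma core_ineq (d m : ℕ) (hm : 1 ≤ m) (p σ ξt lam LamC H V0 : ℝ)
    (hp1 : 1 < p) (hp2 : p ≤ 2) (hlam : 0 < lam) (hξ : 0 ≤ ξt) (hH0 : 0 ≤ H)
    (uk : Fin m → ℝ) (a : Fin d → Fin m → ℝ)
    (qx : Fin d → Fin d → ℝ)
    (Bt : Fin d → Fin m → Fin m → ℝ) (Cx : Fin m → Fin m → ℝ)
    (hq : ∀ w : Fin d → ℝ, lam * ∑ i, (w i) ^ 2 ≤ ∑ i, ∑ j, qx i j * w i * w j)
    (hqsym : ∀ i j, qx i j = qx j i)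
    (hBt : ∀ i k l, |Bt i k l| ≤ ξt * lam ^ σ)
    (hC : ∀ w : Fin m → ℝ, ∑ k, ∑ l, Cx k l * w k * w l ≤ LamC * ∑ k, (w k) ^ 2)
    (hHb : LamC + d * m ^ 2 * ξt ^ 2 / (4 * (p - 1)) * lam ^ (2 * σ - 1) ≤ H)
    (hV0U : (∑ k, (uk k) ^ 2) ≤ V0) (hV0 : 0 < V0) :
    V0 * ((∑ i, ∑ k, ∑ l, uk k * Bt i k l * a i l) + ∑ k, ∑ l, Cx k l * uk k * uk l)
      ≤ V0 * (∑ i, ∑ j, qx i j * ∑ k, a i k * a j k)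
        + (p - 2) * (∑ i, ∑ j, qx i j * ((∑ k, uk k * a i k) * (∑ k, uk k * a j k)))
        + H * V0 ^ 2 := by
  have hp1' : (0:ℝ) < p - 1 := by linarith
  set U : ℝ := ∑ k, (uk k) ^ 2 with hU
  set SA : ℝ := ∑ i, ∑ k, (a i k) ^ 2 with hSA
  set Tq : ℝ := ∑ i, ∑ j, qx i j * ∑ k, a i k * a j k with hTq
  set Tw : ℝ := ∑ i, ∑ j, qx i j * ((∑ k, uk k * a i k) * (∑ k, uk k * a j k)) with hTw
  set SB : ℝ := ∑ i, ∑ k, ∑ l, uk k * Bt i k l * a i l with hSB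
  set SC : ℝ := ∑ k, ∑ l, Cx k l * uk k * uk l with hSC
  have hU0 : 0 ≤ U := Finset.sum_nonneg fun k _ => sq_nonneg _
  have hSA0 : 0 ≤ SA := Finset.sum_nonneg fun i _ => Finset.sum_nonneg fun k _ => sq_nonneg _
  have hL : (0:ℝ) < lam ^ σ := Real.rpow_pos_of_pos hlam σ
  set L : ℝ := lam ^ σ with hLdef
  have hlam2 : lam ^ (2 * σ - 1) = L * L / lam := by
    rw [hLdef, show 2 * σ - 1 = σ + (σ + (-1)) by ring, Real.rpow_add hlam,
      Real.rpow_add hlam, Real.rpow_neg_one]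
    ring
  -- h1 : lam * SA ≤ Tq
  have h1 : lam * SA ≤ Tq := by
    have hsum := Finset.sum_le_sum (fun (k : Fin m) (_ : k ∈ Finset.univ) => hq (fun i => a i k))
    calc lam * SA = ∑ k : Fin m, lam * ∑ i, (a i k) ^ 2 := by
          rw [hSA, Finset.sum_comm, ← Finset.mul_sum]
      _ ≤ ∑ k : Fin m, ∑ i, ∑ j, qx i j * a i k * a j k := hsum
      _ = Tq := by
          rw [hTq, sum_comm3 (fun i j k => qx i j * a i k * a j k)]
          refine Finset.sum_congr rfl fun i _ => Finset.sum_congr rfl fun j _ => ?_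
          rw [Finset.mul_sum]
          exact Finset.sum_congr rfl fun k _ => by ring
  have hTq0 : 0 ≤ Tq := le_trans (mul_nonneg hlam.le hSA0) h1
  -- h3 : Tw ≤ U * Tq
  have h3 : Tw ≤ U * Tq := by
    have key := psd_trace (fun k l => ∑ i, ∑ j, qx i j * a i k * a j l)
      (fun k l => by
        have hxy : ∀ (x y : Fin d), qx y x * a y k * a x l = qx x y * a x l * a y k :=
          fun x y => by rw [hqsym y x]; ring
        calc ∑ i, ∑ j, qx i j * a i k * a j l
            = ∑ j, ∑ i, qx i j * a i k * a j l := Finset.sum_comm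
          _ = ∑ i, ∑ j, qx i j * a i l * a j k :=
              Finset.sum_congr rfl fun x _ => Finset.sum_congr rfl fun y _ => hxy x y)
      (fun c => by
        have e : ∑ k, ∑ l, c k * c l * (∑ i, ∑ j, qx i j * a i k * a j l)
            = ∑ i, ∑ j, qx i j * ((∑ k, c k * a i k) * (∑ l, c l * a j l)) := by
          calc ∑ k, ∑ l, c k * c l * (∑ i, ∑ j, qx i j * a i k * a j l)
              = ∑ k, ∑ l, ∑ i, ∑ j, qx i j * (c k * a i k) * (c l * a j l) := by
                refine Finset.sum_congr rfl fun k _ => Finset.sum_congr rfl fun l _ => ?_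
                rw [Finset.mul_sum]
                refine Finset.sum_congr rfl fun i _ => ?_
                rw [Finset.mul_sum]
                exact Finset.sum_congr rfl fun j _ => by ring
            _ = ∑ i, ∑ j, ∑ k, ∑ l, qx i j * (c k * a i k) * (c l * a j l) := by
                rw [sum_comm4 (fun k l i j => qx i j * (c k * a i k) * (c l * a j l))]
            _ = ∑ i, ∑ j, qx i j * ((∑ k, c k * a i k) * (∑ l, c l * a j l)) := by
                refine Finset.sum_congr rfl fun i _ => Finset.sum_congr rfl fun j _ => ?_
                rw [Finset.sum_mul_sum, Finset.mul_sum]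
                refine Finset.sum_congr rfl fun k _ => ?_
                rw [Finset.mul_sum]
                exact Finset.sum_congr rfl fun l _ => by ring
        rw [e]
        have := hq (fun i => ∑ k, c k * a i k)
        have h0 : (0:ℝ) ≤ lam * ∑ i, (∑ k, c k * a i k) ^ 2 := by positivity
        calc (0:ℝ) ≤ lam * ∑ i, (∑ k, c k * a i k) ^ 2 := h0
          _ ≤ ∑ i, ∑ j, qx i j * (∑ k, c k * a i k) * (∑ k, c k * a j k) := this
          _ = ∑ i, ∑ j, qx i j * ((∑ k, c k * a i k) * (∑ l, c l * a j l)) :=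
            Finset.sum_congr rfl fun i _ => Finset.sum_congr rfl fun j _ => by ring) uk
    -- key : ∑ k, ∑ l, uk k * uk l * M k l ≤ (∑ uk²) * ∑ k, M k k
    have e1 : ∑ k, ∑ l, uk k * uk l * (∑ i, ∑ j, qx i j * a i k * a j l) = Tw := by
      calc ∑ k, ∑ l, uk k * uk l * (∑ i, ∑ j, qx i j * a i k * a j l)
          = ∑ k, ∑ l, ∑ i, ∑ j, qx i j * (uk k * a i k) * (uk l * a j l) := by
            refine Finset.sum_congr rfl fun k _ => Finset.sum_congr rfl fun l _ => ?_
            rw [Finset.mul_sum]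
            refine Finset.sum_congr rfl fun i _ => ?_
            rw [Finset.mul_sum]
            exact Finset.sum_congr rfl fun j _ => by ring
        _ = ∑ i, ∑ j, ∑ k, ∑ l, qx i j * (uk k * a i k) * (uk l * a j l) := by
            rw [sum_comm4 (fun k l i j => qx i j * (uk k * a i k) * (uk l * a j l))]
        _ = Tw := by
            rw [hTw]
            refine Finset.sum_congr rfl fun i _ => Finset.sum_congr rfl fun j _ => ?_
            rw [Finset.sum_mul_sum, Finset.mul_sum]
            refine Finset.sum_congr rfl fun k _ => ?_
            rw [Finset.mul_sum]
            exact Finset.sum_congr rfl fun l _ => by ring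
    have e2 : ∑ k : Fin m, (∑ i, ∑ j, qx i j * a i k * a j k) = Tq := by
      rw [hTq, sum_comm3 (fun i j k => qx i j * a i k * a j k)]
      refine Finset.sum_congr rfl fun i _ => Finset.sum_congr rfl fun j _ => ?_
      rw [Finset.mul_sum]
      exact Finset.sum_congr rfl fun k _ => by ring
    rw [e1, e2] at key
    exact key
  -- h4 : SB bound
  have h4 : SB ≤ (p - 1) * lam * SA + d * m ^ 2 * ξt ^ 2 / (4 * (p - 1)) * lam ^ (2 * σ - 1) * U := by
    have hper : ∀ i : Fin d, ∑ k, ∑ l, uk k * Bt i k l * a i l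
        ≤ (p - 1) * lam * (∑ l, (a i l) ^ 2)
          + m ^ 2 * ξt ^ 2 / (4 * (p - 1)) * lam ^ (2 * σ - 1) * U := by
      intro i
      set P : ℝ := ∑ k, |uk k| with hP
      set Q : ℝ := ∑ l, |a i l| with hQ
      have hP0 : 0 ≤ P := Finset.sum_nonneg fun k _ => abs_nonneg _
      have hQ0 : 0 ≤ Q := Finset.sum_nonneg fun l _ => abs_nonneg _
      have hPsq : P ^ 2 ≤ m * U := by
        have := sq_sum_le_card_mul_sum_sq (s := (Finset.univ : Finset (Fin m))) (f := fun k => |uk k|)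
        simpa [hU, sq_abs] using this
      have hQsq : Q ^ 2 ≤ m * (∑ l, (a i l) ^ 2) := by
        have := sq_sum_le_card_mul_sum_sq (s := (Finset.univ : Finset (Fin m))) (f := fun l => |a i l|)
        simpa [sq_abs] using this
      have step1 : ∑ k, ∑ l, uk k * Bt i k l * a i l ≤ ξt * L * (P * Q) := by
        have hterm : ∀ k l : Fin m, uk k * Bt i k l * a i l ≤ ξt * L * (|uk k| * |a i l|) := by
          intro k l
          calc uk k * Bt i k l * a i l ≤ |uk k * Bt i k l * a i l| := le_abs_self _
            _ = |Bt i k l| * (|uk k| * |a i l|) := by rw [abs_mul, abs_mul]; ring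
            _ ≤ ξt * L * (|uk k| * |a i l|) := by
                apply mul_le_mul_of_nonneg_right (hBt i k l) (by positivity)
        calc ∑ k, ∑ l, uk k * Bt i k l * a i l
            ≤ ∑ k, ∑ l, ξt * L * (|uk k| * |a i l|) :=
              Finset.sum_le_sum fun k _ => Finset.sum_le_sum fun l _ => hterm k l
          _ = ξt * L * (P * Q) := by
              rw [hP, hQ, Finset.sum_mul_sum]
              simp_rw [Finset.mul_sum]
      have hm1 : (1:ℝ) ≤ (m:ℝ) := by exact_mod_cast hm
      set A : ℝ := ∑ l, (a i l) ^ 2 with hA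
      have hA0 : 0 ≤ A := Finset.sum_nonneg fun l _ => sq_nonneg _
      have step2 : ξt * L * (P * Q) ≤ (p - 1) * lam * A + m ^ 2 * ξt ^ 2 / (4 * (p - 1)) * (L * L / lam) * U := by
        have hmpos : (0:ℝ) < (m:ℝ) := by linarith
        rw [← sub_nonneg]
        have expand : (p - 1) * lam * A + m ^ 2 * ξt ^ 2 / (4 * (p - 1)) * (L * L / lam) * U
            - ξt * L * (P * Q)
            = (4 * ((p-1)*lam)^2 * ((m:ℝ) * A - Q^2) + (m:ℝ)^2 * ξt^2 * L^2 * ((m:ℝ) * U - P^2)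
              + (2 * ((p-1)*lam) * Q - (m:ℝ) * (ξt * L) * P) ^ 2) / (4 * ((p-1)*lam) * (m:ℝ)) := by
          field_simp
          ring
        rw [expand]
        apply div_nonneg
        · have t1 : 0 ≤ (m:ℝ) * A - Q^2 := by linarith
          have t2 : 0 ≤ (m:ℝ) * U - P^2 := by linarith
          have h4a : 0 ≤ 4 * ((p-1)*lam)^2 * ((m:ℝ) * A - Q^2) := mul_nonneg (by positivity) t1
          have h4b : 0 ≤ (m:ℝ)^2 * ξt^2 * L^2 * ((m:ℝ) * U - P^2) := mul_nonneg (by positivity) t2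
          nlinarith [sq_nonneg (2 * ((p-1)*lam) * Q - (m:ℝ) * (ξt * L) * P)]
        · positivity
      calc ∑ k, ∑ l, uk k * Bt i k l * a i l ≤ ξt * L * (P * Q) := step1
        _ ≤ (p - 1) * lam * A + m ^ 2 * ξt ^ 2 / (4 * (p - 1)) * (L * L / lam) * U := step2
        _ = (p - 1) * lam * (∑ l, (a i l) ^ 2)
            + m ^ 2 * ξt ^ 2 / (4 * (p - 1)) * lam ^ (2 * σ - 1) * U := by rw [hlam2, hA]
    calc SB ≤ ∑ i : Fin d, ((p - 1) * lam * (∑ l, (a i l) ^ 2)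
          + m ^ 2 * ξt ^ 2 / (4 * (p - 1)) * lam ^ (2 * σ - 1) * U) :=
        Finset.sum_le_sum fun i _ => hper i
      _ = (p - 1) * lam * SA + d * m ^ 2 * ξt ^ 2 / (4 * (p - 1)) * lam ^ (2 * σ - 1) * U := by
        rw [Finset.sum_add_distrib, ← Finset.mul_sum, hSA, Finset.sum_const, Finset.card_univ]
        simp [nsmul_eq_mul]
        ring
  -- h5
  have h5 : SC ≤ LamC * U := hC uk
  -- combine
  have hlam21 : (0:ℝ) < lam ^ (2 * σ - 1) := Real.rpow_pos_of_pos hlam _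
  set KK : ℝ := d * m ^ 2 * ξt ^ 2 / (4 * (p - 1)) * lam ^ (2 * σ - 1) with hKKdef
  have hKK : 0 ≤ KK := by rw [hKKdef]; positivity
  have m1 : V0 * (SB + SC) ≤ V0 * ((p-1)*lam*SA + KK*U + LamC*U) :=
    mul_le_mul_of_nonneg_left (by linarith [h4, h5]) hV0.le
  have m3 : (p-1)*(V0*(lam*SA)) ≤ (p-1)*(V0*Tq) :=
    mul_le_mul_of_nonneg_left (mul_le_mul_of_nonneg_left h1 hV0.le) (by linarith)
  have m4 : (KK+LamC)*(U*V0) ≤ H*(U*V0) :=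
    mul_le_mul_of_nonneg_right (by linarith [hHb]) (mul_nonneg hU0 hV0.le)
  have m5 : H*(U*V0) ≤ H*(V0*V0) :=
    mul_le_mul_of_nonneg_left (mul_le_mul_of_nonneg_right hV0U hV0.le) hH0
  have m6 : (2-p)*Tw ≤ (2-p)*(U*Tq) := mul_le_mul_of_nonneg_left h3 (by linarith)
  have m7 : (2-p)*(U*Tq) ≤ (2-p)*(V0*Tq) :=
    mul_le_mul_of_nonneg_left (mul_le_mul_of_nonneg_right hV0U hTq0) (by linarith)
  nlinarith [m1, m3, m4, m5, m6, m7]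

set_option maxHeartbeats 1600000 in
lemma assemble (d m : ℕ) (hm : 1 ≤ m) (p σ ξt lam LamC H ε : ℝ)
    (hp1 : 1 < p) (hp2 : p ≤ 2) (hlam : 0 < lam) (hξ : 0 ≤ ξt) (hH0 : 0 ≤ H) (hε : 0 < ε)
    (uk : Fin m → ℝ) (a : Fin d → Fin m → ℝ) (hh : Fin d → Fin d → Fin m → ℝ)
    (qx Dq : Fin d → Fin d → ℝ) (bb : Fin d → ℝ)
    (Bt : Fin d → Fin m → Fin m → ℝ) (Cx : Fin m → Fin m → ℝ)
    (hq : ∀ w : Fin d → ℝ, lam * ∑ i, (w i) ^ 2 ≤ ∑ i, ∑ j, qx i j * w i * w j)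
    (hqsym : ∀ i j, qx i j = qx j i)
    (hBt : ∀ i k l, |Bt i k l| ≤ ξt * lam ^ σ)
    (hC : ∀ w : Fin m → ℝ, ∑ k, ∑ l, Cx k l * w k * w l ≤ LamC * ∑ k, (w k) ^ 2)
    (hHb : LamC + d * m ^ 2 * ξt ^ 2 / (4 * (p - 1)) * lam ^ (2 * σ - 1) ≤ H) :
    p / 2 * ((∑ k, (uk k) ^ 2) + ε) ^ (p / 2 - 1) * (∑ k, 2 * uk k *
        ((∑ i, ∑ j, (Dq i j * a j k + qx i j * hh i j k))
          + (∑ i, (bb i * a i k + ∑ l, Bt i k l * a i l)) + ∑ l, Cx k l * uk l))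
      ≤ (∑ i, ∑ j, (Dq i j * (p / 2 * ((∑ k, (uk k) ^ 2) + ε) ^ (p / 2 - 1) * (∑ k, 2 * uk k * a j k))
            + qx i j * (p / 2 * ((p / 2 - 1) * ((∑ k, (uk k) ^ 2) + ε) ^ (p / 2 - 2) *
                ((∑ k, 2 * uk k * a i k) * (∑ k, 2 * uk k * a j k))
              + ((∑ k, (uk k) ^ 2) + ε) ^ (p / 2 - 1) *
                (∑ k, (2 * (a i k * a j k) + 2 * (uk k * hh i j k)))))))
        + (∑ i, bb i * (p / 2 * ((∑ k, (uk k) ^ 2) + ε) ^ (p / 2 - 1) * (∑ k, 2 * uk k * a i k)))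
        + p * H * ((∑ k, (uk k) ^ 2) + ε) ^ (p / 2) := by
  have hp1' : (0:ℝ) < p - 1 := by linarith
  set V0 : ℝ := (∑ k, (uk k) ^ 2) + ε with hV0def
  have hV0 : 0 < V0 := by
    have : (0:ℝ) ≤ ∑ k, (uk k) ^ 2 := Finset.sum_nonneg fun k _ => sq_nonneg _
    rw [hV0def]; linarith
  have hV0U : (∑ k, (uk k) ^ 2) ≤ V0 := by rw [hV0def]; linarith
  set P1 : ℝ := V0 ^ (p / 2 - 1) with hP1def
  set P2 : ℝ := V0 ^ (p / 2 - 2) with hP2def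
  have hP2 : 0 < P2 := Real.rpow_pos_of_pos hV0 _
  have hP1eq : P1 = P2 * V0 := by
    rw [hP1def, hP2def, ← Real.rpow_add_one hV0.ne' (p / 2 - 2)]
    congr 1
    ring
  have hPtop : V0 ^ (p / 2) = P1 * V0 := by
    rw [hP1def, ← Real.rpow_add_one hV0.ne' (p / 2 - 1)]
    congr 1
    ring
  -- atoms
  set SDqA : ℝ := ∑ i, ∑ j, Dq i j * ∑ k, uk k * a j k with hSDqA
  set SqH : ℝ := ∑ i, ∑ j, qx i j * ∑ k, uk k * hh i j k with hSqH
  set SbA : ℝ := ∑ i, bb i * ∑ k, uk k * a i k with hSbA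
  set SB : ℝ := ∑ i, ∑ k, ∑ l, uk k * Bt i k l * a i l with hSB
  set SC : ℝ := ∑ k, ∑ l, Cx k l * uk k * uk l with hSC
  set Tq : ℝ := ∑ i, ∑ j, qx i j * ∑ k, a i k * a j k with hTq
  set Tw : ℝ := ∑ i, ∑ j, qx i j * ((∑ k, uk k * a i k) * (∑ k, uk k * a j k)) with hTw
  -- LHS equality
  have eL : (∑ k, 2 * uk k *
        ((∑ i, ∑ j, (Dq i j * a j k + qx i j * hh i j k))
          + (∑ i, (bb i * a i k + ∑ l, Bt i k l * a i l)) + ∑ l, Cx k l * uk l))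
      = 2 * (SDqA + SqH + SbA + SB + SC) := by
    have e1 : ∀ k : Fin m, 2 * uk k *
        ((∑ i, ∑ j, (Dq i j * a j k + qx i j * hh i j k))
          + (∑ i, (bb i * a i k + ∑ l, Bt i k l * a i l)) + ∑ l, Cx k l * uk l)
        = (∑ i, ∑ j, 2 * (Dq i j * (uk k * a j k)) + ∑ i, ∑ j, 2 * (qx i j * (uk k * hh i j k)))
          + (∑ i, 2 * (bb i * (uk k * a i k)) + ∑ i, ∑ l, 2 * (uk k * Bt i k l * a i l))
          + ∑ l, 2 * (Cx k l * uk k * uk l) := by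
      intro k
      rw [mul_add, mul_add]
      congr 1
      · congr 1
        · rw [← Finset.sum_add_distrib, Finset.mul_sum]
          refine Finset.sum_congr rfl fun i _ => ?_
          rw [← Finset.sum_add_distrib, Finset.mul_sum]
          exact Finset.sum_congr rfl fun j _ => by ring
        · rw [← Finset.sum_add_distrib, Finset.mul_sum]
          refine Finset.sum_congr rfl fun i _ => ?_
          rw [mul_add]
          congr 1
          · ring
          · rw [Finset.mul_sum]
            exact Finset.sum_congr rfl fun l _ => by ring
      · rw [Finset.mul_sum]
        exact Finset.sum_congr rfl fun l _ => by ring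
    rw [Finset.sum_congr rfl fun k _ => e1 k]
    simp only [Finset.sum_add_distrib]
    have c1 : ∑ k : Fin m, ∑ i, ∑ j, 2 * (Dq i j * (uk k * a j k)) = 2 * SDqA := by
      rw [sum_comm3 (fun i j k => 2 * (Dq i j * (uk k * a j k))), hSDqA, Finset.mul_sum]
      refine Finset.sum_congr rfl fun i _ => ?_
      rw [Finset.mul_sum]
      refine Finset.sum_congr rfl fun j _ => ?_
      rw [Finset.mul_sum, Finset.mul_sum]
    have c2 : ∑ k : Fin m, ∑ i, ∑ j, 2 * (qx i j * (uk k * hh i j k)) = 2 * SqH := by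
      rw [sum_comm3 (fun i j k => 2 * (qx i j * (uk k * hh i j k))), hSqH, Finset.mul_sum]
      refine Finset.sum_congr rfl fun i _ => ?_
      rw [Finset.mul_sum]
      refine Finset.sum_congr rfl fun j _ => ?_
      rw [Finset.mul_sum, Finset.mul_sum]
    have c3 : ∑ k : Fin m, ∑ i, 2 * (bb i * (uk k * a i k)) = 2 * SbA := by
      rw [Finset.sum_comm, hSbA, Finset.mul_sum]
      refine Finset.sum_congr rfl fun i _ => ?_
      rw [Finset.mul_sum, Finset.mul_sum]
    have c4 : ∑ k : Fin m, ∑ i, ∑ l, 2 * (uk k * Bt i k l * a i l) = 2 * SB := by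
      rw [Finset.sum_comm, hSB, Finset.mul_sum]
      refine Finset.sum_congr rfl fun i _ => ?_
      rw [Finset.mul_sum]
      refine Finset.sum_congr rfl fun k _ => ?_
      rw [Finset.mul_sum]
    have c5 : ∑ k : Fin m, ∑ l, 2 * (Cx k l * uk k * uk l) = 2 * SC := by
      rw [hSC, Finset.mul_sum]
      refine Finset.sum_congr rfl fun k _ => ?_
      rw [Finset.mul_sum]
    rw [c1, c2, c3, c4, c5]
    ring
  -- RHS equalities
  have tw2 : ∀ i : Fin d, (∑ k, 2 * uk k * a i k) = 2 * ∑ k, uk k * a i k := by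
    intro i
    rw [Finset.mul_sum]
    exact Finset.sum_congr rfl fun k _ => by ring
  have eR1 : (∑ i, ∑ j, (Dq i j * (p / 2 * P1 * (∑ k, 2 * uk k * a j k))
            + qx i j * (p / 2 * ((p / 2 - 1) * P2 *
                ((∑ k, 2 * uk k * a i k) * (∑ k, 2 * uk k * a j k))
              + P1 * (∑ k, (2 * (a i k * a j k) + 2 * (uk k * hh i j k)))))))
      = p * P1 * SDqA + p * (p - 2) * P2 * Tw + p * P1 * Tq + p * P1 * SqH := by
    have ePer : ∀ i j : Fin d, Dq i j * (p / 2 * P1 * (∑ k, 2 * uk k * a j k))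
            + qx i j * (p / 2 * ((p / 2 - 1) * P2 *
                ((∑ k, 2 * uk k * a i k) * (∑ k, 2 * uk k * a j k))
              + P1 * (∑ k, (2 * (a i k * a j k) + 2 * (uk k * hh i j k)))))
        = p * P1 * (Dq i j * ∑ k, uk k * a j k)
          + p * (p - 2) * P2 * (qx i j * ((∑ k, uk k * a i k) * (∑ k, uk k * a j k)))
          + p * P1 * (qx i j * ∑ k, a i k * a j k)
          + p * P1 * (qx i j * ∑ k, uk k * hh i j k) := by
      intro i j
      rw [tw2 i, tw2 j]
      have esplit : (∑ k, (2 * (a i k * a j k) + 2 * (uk k * hh i j k)))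
          = 2 * (∑ k, a i k * a j k) + 2 * (∑ k, uk k * hh i j k) := by
        rw [Finset.sum_add_distrib, Finset.mul_sum, Finset.mul_sum]
      rw [esplit]
      ring
    rw [Finset.sum_congr rfl fun i _ => Finset.sum_congr rfl fun j _ => ePer i j]
    simp only [Finset.sum_add_distrib]
    rw [hSDqA, hTw, hTq, hSqH]
    simp only [Finset.mul_sum]
  have eR2 : (∑ i, bb i * (p / 2 * P1 * (∑ k, 2 * uk k * a i k))) = p * P1 * SbA := by
    have : ∀ i : Fin d, bb i * (p / 2 * P1 * (∑ k, 2 * uk k * a i k))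
        = p * P1 * (bb i * ∑ k, uk k * a i k) := fun i => by rw [tw2 i]; ring
    rw [Finset.sum_congr rfl fun i _ => this i, hSbA, Finset.mul_sum]
  rw [eL, eR1, eR2, hPtop]
  have hcore := core_ineq d m hm p σ ξt lam LamC H V0 hp1 hp2 hlam hξ hH0 uk a qx Bt Cx
    hq hqsym hBt hC hHb hV0U hV0
  rw [← hSB, ← hSC, ← hTq, ← hTw] at hcore
  have hmul := mul_le_mul_of_nonneg_left hcore (by positivity : (0:ℝ) ≤ p * P2)
  rw [hP1eq]
  have expand1 : p / 2 * (P2 * V0) * (2 * (SDqA + SqH + SbA + SB + SC))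
      = p * P2 * (V0 * (SB + SC))
        + (p * (P2 * V0) * SDqA + p * (P2 * V0) * SqH + p * (P2 * V0) * SbA) := by ring
  have expand2 : p * (P2 * V0) * SDqA + p * (p - 2) * P2 * Tw + p * (P2 * V0) * Tq
        + p * (P2 * V0) * SqH + p * (P2 * V0) * SbA + p * H * (P2 * V0 * V0)
      = p * P2 * (V0 * Tq + (p - 2) * Tw + H * V0 ^ 2)
        + (p * (P2 * V0) * SDqA + p * (P2 * V0) * SqH + p * (P2 * V0) * SbA) := by ring
  rw [expand1, expand2]
  exact add_le_add hmul le_rfl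

set_option maxHeartbeats 3200000 in
/-- The key differential inequality of Proposition 2.4: if `u` solves the
vector-valued parabolic system `D_t u = ∑ D_i(q_{ij} D_j u) + ∑ B_i D_i u + C u` with
`B_i = b_i I_m + B̃_i`, `|(B̃_i)_{jk}| ≤ ξ(t) λ_Q^σ` and
`Λ_C + (d m² ξ²/(4(p−1))) λ_Q^{2σ−1} ≤ H`, then for every `ε > 0` the function
`w = (|u|² + ε)^{p/2}` satisfies `D_t w ≤ ∑ D_i(q_{ij} D_j w) + ∑ b_i D_i w + p H w`. -/
theorem stmt_2 (d m : ℕ) (hd : 1 ≤ d) (hm : 1 ≤ m)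
    (s T p ν₀ σ H : ℝ) (hsT : s < T) (hp : 1 < p ∧ p ≤ 2) (hν₀ : 0 < ν₀)
    (hσ : 0 < σ) (hH : 0 ≤ H)
    (ξ : ℝ → ℝ) (hξ : ∀ t ∈ Ioo s T, 0 < ξ t)
    (q : ℝ → EuclideanSpace ℝ (Fin d) → Matrix (Fin d) (Fin d) ℝ)
    (lamQ : ℝ → EuclideanSpace ℝ (Fin d) → ℝ)
    (hq_symm : ∀ t ∈ Ioo s T, ∀ x, (q t x).IsSymm)
    (hq_cont : ∀ i j : Fin d, ContinuousOn
      (fun pt : ℝ × EuclideanSpace ℝ (Fin d) => q pt.1 pt.2 i j)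
      (Ioo s T ×ˢ (univ : Set (EuclideanSpace ℝ (Fin d)))))
    (hq_reg : ∀ t ∈ Ioo s T, ∀ i j : Fin d, ContDiff ℝ 1 (fun x => q t x i j))
    (hlamQ : ∀ t ∈ Ioo s T, ∀ x, IsMinEigen (q t x) (lamQ t x) ∧ ν₀ ≤ lamQ t x)
    (b : Fin d → ℝ → EuclideanSpace ℝ (Fin d) → ℝ)
    (Btil : Fin d → ℝ → EuclideanSpace ℝ (Fin d) → Matrix (Fin m) (Fin m) ℝ)
    (hBtil : ∀ i : Fin d, ∀ t ∈ Ioo s T, ∀ x, ∀ j k : Fin m,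
      |Btil i t x j k| ≤ ξ t * lamQ t x ^ σ)
    (hB_symm : ∀ i : Fin d, ∀ t ∈ Ioo s T, ∀ x,
      (Matrix.IsSymm (b i t x • (1 : Matrix (Fin m) (Fin m) ℝ) + Btil i t x)))
    (C : ℝ → EuclideanSpace ℝ (Fin d) → Matrix (Fin m) (Fin m) ℝ)
    (LamC : ℝ → EuclideanSpace ℝ (Fin d) → ℝ)
    (hC_symm : ∀ t ∈ Ioo s T, ∀ x, (C t x).IsSymm)
    (hC_cont : ∀ k l : Fin m, ContinuousOn
      (fun pt : ℝ × EuclideanSpace ℝ (Fin d) => C pt.1 pt.2 k l)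
      (Ioo s T ×ˢ (univ : Set (EuclideanSpace ℝ (Fin d)))))
    (hLamC : ∀ t ∈ Ioo s T, ∀ x, IsMaxEigen (C t x) (LamC t x))
    (hH_bound : ∀ t ∈ Ioo s T, ∀ x,
      LamC t x + d * m ^ 2 * (ξ t) ^ 2 / (4 * (p - 1)) * lamQ t x ^ (2 * σ - 1) ≤ H)
    (u : ℝ → EuclideanSpace ℝ (Fin d) → Fin m → ℝ)
    (hu_reg : ∀ t ∈ Ioo s T, ContDiff ℝ 2 (u t))
    (hu_pde : ∀ t ∈ Ioo s T, ∀ x,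
      HasDerivAt (fun τ => u τ x)
        (fun k : Fin m =>
          (∑ i : Fin d, ∑ j : Fin d,
            pd (fun y => q t y i j * pd (fun z => u t z k) y j) x i) +
          (∑ i : Fin d, (b i t x * pd (fun z => u t z k) x i +
            ∑ l : Fin m, Btil i t x k l * pd (fun z => u t z l) x i)) +
          ∑ l : Fin m, C t x k l * u t x l)
        t) :
    ∀ ε : ℝ, 0 < ε →
      ∀ w : ℝ → EuclideanSpace ℝ (Fin d) → ℝ,
        (∀ τ, ∀ y, w τ y = ((∑ k : Fin m, (u τ y k) ^ 2) + ε) ^ (p / 2)) →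
        ∀ t ∈ Ioo s T, ∀ x,
          deriv (fun τ => w τ x) t ≤
            (∑ i : Fin d, ∑ j : Fin d,
              pd (fun y => q t y i j * pd (fun z => w t z) y j) x i) +
            (∑ i : Fin d, b i t x * pd (fun z => w t z) x i) +
            p * H * w t x := by
  intro ε hε w hw t ht x
  obtain ⟨hp1, hp2⟩ := hp
  have hu2 : ContDiff ℝ 2 (u t) := hu_reg t ht
  -- component regularity
  have hUkC : ∀ k : Fin m, ContDiff ℝ 2 (fun z => u t z k) := fun k =>
    (ContinuousLinearMap.proj k : (Fin m → ℝ) →L[ℝ] ℝ).contDiff.comp hu2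
  have hUkd : ∀ k : Fin m, Differentiable ℝ (fun z => u t z k) := fun k =>
    (hUkC k).differentiable (by norm_num)
  have hpdUC : ∀ (k : Fin m) (j : Fin d),
      ContDiff ℝ 1 (fun y => pd (fun z => u t z k) y j) := by
    intro k j
    have h1 : ContDiff ℝ 1 (fderiv ℝ (fun z => u t z k)) :=
      (hUkC k).fderiv_right (by norm_num)
    exact (ContinuousLinearMap.apply ℝ ℝ (EuclideanSpace.single j 1)).contDiff.comp h1
  have hpdUd : ∀ (k : Fin m) (j : Fin d),
      Differentiable ℝ (fun y => pd (fun z => u t z k) y j) := fun k j =>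
    (hpdUC k j).differentiable (by norm_num)
  -- V and its derivatives
  set V : EuclideanSpace ℝ (Fin d) → ℝ := fun y => (∑ k, (u t y k) ^ 2) + ε with hVdef
  have hVfd : ∀ y, HasFDerivAt V
      (∑ k, (2 * u t y k) • fderiv ℝ (fun z => u t z k) y) y := by
    intro y
    have hsq : ∀ k : Fin m, HasFDerivAt (fun z => (u t z k) ^ 2)
        ((2 * u t y k) • fderiv ℝ (fun z => u t z k) y) y := by
      intro k
      have h := ((hUkd k) y).hasFDerivAt
      have h2 := h.fun_mul h
      have e1 : (fun z => (u t z k) ^ 2) = fun z => u t z k * u t z k := by funext z; ring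
      have e2 : (2 * u t y k) • fderiv ℝ (fun z => u t z k) y
          = u t y k • fderiv ℝ (fun z => u t z k) y + u t y k • fderiv ℝ (fun z => u t z k) y := by
        rw [two_mul, add_smul]
      rw [e1, e2]
      exact h2
    exact (HasFDerivAt.fun_sum (fun k (_ : k ∈ Finset.univ) => hsq k)).add_const ε
  have hVd : ∀ y, DifferentiableAt ℝ V y := fun y => (hVfd y).differentiableAt
  have hVpos : ∀ y, 0 < V y := by
    intro y
    have : (0:ℝ) ≤ ∑ k, (u t y k) ^ 2 := Finset.sum_nonneg fun k _ => sq_nonneg _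
    simp only [hVdef]
    linarith
  have hpdV : ∀ y (j : Fin d), pd V y j = ∑ k, 2 * u t y k * pd (fun z => u t z k) y j := by
    intro y j
    unfold pd
    rw [(hVfd y).fderiv]
    simp [ContinuousLinearMap.sum_apply, ContinuousLinearMap.smul_apply, mul_assoc]
  -- W and its derivatives
  set W : EuclideanSpace ℝ (Fin d) → ℝ := fun y => V y ^ (p / 2) with hWdef
  have hWfd : ∀ y, HasFDerivAt W ((p / 2 * V y ^ (p / 2 - 1)) • fderiv ℝ V y) y := fun y =>
    hasFDerivAt_rpow_comp (hVd y).hasFDerivAt (hVpos y) (p / 2)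
  have hpdW : ∀ y (j : Fin d), pd W y j = p / 2 * V y ^ (p / 2 - 1) * pd V y j := by
    intro y j
    unfold pd
    rw [(hWfd y).fderiv]
    simp [ContinuousLinearMap.smul_apply]
  have hpdWf : ∀ y (j : Fin d), pd W y j
      = p / 2 * V y ^ (p / 2 - 1) * ∑ k, 2 * u t y k * pd (fun z => u t z k) y j := by
    intro y j
    rw [hpdW y j, hpdV y j]
  have hwteq : (fun z => w t z) = W := by
    funext y
    rw [hw t y]
  -- differentiability of auxiliary functions at every point
  have hrpow1d : Differentiable ℝ (fun y => V y ^ (p / 2 - 1)) := fun y =>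
    (hVd y).rpow_const (Or.inl (hVpos y).ne')
  have hSjd : ∀ j : Fin d, Differentiable ℝ
      (fun y => ∑ k, 2 * u t y k * pd (fun z => u t z k) y j) := by
    intro j
    apply Differentiable.fun_sum
    intro k _
    exact ((differentiable_const (2:ℝ)).mul (hUkd k)).mul (hpdUd k j)
  have hGd : ∀ j : Fin d, Differentiable ℝ
      (fun y => p / 2 * V y ^ (p / 2 - 1) * ∑ k, 2 * u t y k * pd (fun z => u t z k) y j) := by
    intro j
    exact ((differentiable_const (p/2)).mul hrpow1d).mul (hSjd j)
  -- derivative of V^(p/2-1)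
  have hpdrpow1 : ∀ (i : Fin d), pd (fun y => V y ^ (p / 2 - 1)) x i
      = (p / 2 - 1) * V x ^ (p / 2 - 2) * pd V x i := by
    intro i
    have h := hasFDerivAt_rpow_comp (hVd x).hasFDerivAt (hVpos x) (p / 2 - 1)
    unfold pd
    rw [h.fderiv, ContinuousLinearMap.smul_apply, smul_eq_mul,
      show p / 2 - 1 - 1 = p / 2 - 2 by ring]
  -- derivative of Sj
  have hpdSj : ∀ (i j : Fin d), pd (fun y => ∑ k, 2 * u t y k * pd (fun z => u t z k) y j) x i
      = ∑ k, (2 * (pd (fun z => u t z k) x i * pd (fun z => u t z k) x j)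
          + 2 * (u t x k * pd (fun y => pd (fun z => u t z k) y j) x i)) := by
    intro i j
    rw [pd_sum Finset.univ (fun k y => 2 * u t y k * pd (fun z => u t z k) y j) x i
      (fun k _ => (((differentiable_const (2:ℝ)).mul (hUkd k)).mul (hpdUd k j)) x)]
    refine Finset.sum_congr rfl fun k _ => ?_
    rw [pd_mul (fun y => 2 * u t y k) (fun y => pd (fun z => u t z k) y j) x i
      (((differentiable_const (2:ℝ)).mul (hUkd k)) x) ((hpdUd k j) x)]
    rw [pd_const_mul 2 (fun y => u t y k) x i ((hUkd k) x)]
    ring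
  -- EQ2 : first-order term
  have EQ2 : ∀ i : Fin d, pd W x i
      = p / 2 * ((∑ k, (u t x k) ^ 2) + ε) ^ (p / 2 - 1)
        * ∑ k, 2 * u t x k * pd (fun z => u t z k) x i := by
    intro i
    rw [hpdWf x i]
  -- EQ1 : second-order term
  have EQ1 : ∀ i j : Fin d, pd (fun y => q t y i j * pd W y j) x i
      = pd (fun y => q t y i j) x i
          * (p / 2 * ((∑ k, (u t x k) ^ 2) + ε) ^ (p / 2 - 1)
              * (∑ k, 2 * u t x k * pd (fun z => u t z k) x j))
        + q t x i j * (p / 2 * ((p / 2 - 1) * ((∑ k, (u t x k) ^ 2) + ε) ^ (p / 2 - 2) *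
              ((∑ k, 2 * u t x k * pd (fun z => u t z k) x i)
                * (∑ k, 2 * u t x k * pd (fun z => u t z k) x j))
            + ((∑ k, (u t x k) ^ 2) + ε) ^ (p / 2 - 1) *
              (∑ k, (2 * (pd (fun z => u t z k) x i * pd (fun z => u t z k) x j)
                + 2 * (u t x k * pd (fun y => pd (fun z => u t z k) y j) x i))))) := by
    intro i j
    have hfe : (fun y => q t y i j * pd W y j)
        = (fun y => q t y i j * (p / 2 * V y ^ (p / 2 - 1)
            * ∑ k, 2 * u t y k * pd (fun z => u t z k) y j)) := by
      funext y
      rw [hpdWf y j]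
    rw [hfe]
    rw [pd_mul (fun y => q t y i j)
      (fun y => p / 2 * V y ^ (p / 2 - 1) * ∑ k, 2 * u t y k * pd (fun z => u t z k) y j) x i
      (((hq_reg t ht i j).differentiable (by norm_num)) x) ((hGd j) x)]
    rw [pd_mul (fun y => p / 2 * V y ^ (p / 2 - 1))
      (fun y => ∑ k, 2 * u t y k * pd (fun z => u t z k) y j) x i
      (((differentiable_const (p/2)).mul hrpow1d) x) ((hSjd j) x)]
    rw [pd_const_mul (p/2) (fun y => V y ^ (p / 2 - 1)) x i (hrpow1d x)]
    rw [hpdrpow1 i, hpdSj i j, hpdV x i]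
    ring
  -- PDE second-order expansion
  have EQpde : ∀ (i j : Fin d) (k : Fin m),
      pd (fun y => q t y i j * pd (fun z => u t z k) y j) x i
      = pd (fun y => q t y i j) x i * pd (fun z => u t z k) x j
        + q t x i j * pd (fun y => pd (fun z => u t z k) y j) x i := by
    intro i j k
    rw [pd_mul (fun y => q t y i j) (fun y => pd (fun z => u t z k) y j) x i
      (((hq_reg t ht i j).differentiable (by norm_num)) x) ((hpdUd k j) x)]
  -- time derivative
  have EQdt : deriv (fun τ => w τ x) t
      = p / 2 * ((∑ k, (u t x k) ^ 2) + ε) ^ (p / 2 - 1) * ∑ k, 2 * u t x k *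
          ((∑ i : Fin d, ∑ j : Fin d,
            pd (fun y => q t y i j * pd (fun z => u t z k) y j) x i) +
          (∑ i : Fin d, (b i t x * pd (fun z => u t z k) x i +
            ∑ l : Fin m, Btil i t x k l * pd (fun z => u t z l) x i)) +
          ∑ l : Fin m, C t x k l * u t x l) := by
    have hcomp : ∀ k : Fin m, HasDerivAt (fun τ => u τ x k)
        ((∑ i : Fin d, ∑ j : Fin d,
            pd (fun y => q t y i j * pd (fun z => u t z k) y j) x i) +
          (∑ i : Fin d, (b i t x * pd (fun z => u t z k) x i +
            ∑ l : Fin m, Btil i t x k l * pd (fun z => u t z l) x i)) +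
          ∑ l : Fin m, C t x k l * u t x l) t := by
      intro k
      exact (ContinuousLinearMap.proj k : (Fin m → ℝ) →L[ℝ] ℝ).hasFDerivAt.comp_hasDerivAt t
        (hu_pde t ht x)
    have hg : HasDerivAt (fun τ => (∑ k, (u τ x k) ^ 2) + ε)
        (∑ k, 2 * u t x k *
          ((∑ i : Fin d, ∑ j : Fin d,
            pd (fun y => q t y i j * pd (fun z => u t z k) y j) x i) +
          (∑ i : Fin d, (b i t x * pd (fun z => u t z k) x i +
            ∑ l : Fin m, Btil i t x k l * pd (fun z => u t z l) x i)) +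
          ∑ l : Fin m, C t x k l * u t x l)) t := by
      refine (HasDerivAt.fun_sum (fun k (_ : k ∈ Finset.univ) => ?_)).add_const ε
      have := (hcomp k).fun_pow 2
      convert this using 1
      all_goals norm_num
      rfl
    have hrpow : HasDerivAt (fun r : ℝ => r ^ (p / 2))
        (p / 2 * ((∑ k, (u t x k) ^ 2) + ε) ^ (p / 2 - 1)) ((∑ k, (u t x k) ^ 2) + ε) := by
      have := (Real.hasStrictDerivAt_rpow_const
        (x := (∑ k, (u t x k) ^ 2) + ε) (p := p / 2) (Or.inl (hVpos x).ne')).hasDerivAt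
      exact this
    have hcompfull : HasDerivAt (fun τ => ((∑ k, (u τ x k) ^ 2) + ε) ^ (p / 2))
        (p / 2 * ((∑ k, (u t x k) ^ 2) + ε) ^ (p / 2 - 1) * ∑ k, 2 * u t x k *
          ((∑ i : Fin d, ∑ j : Fin d,
            pd (fun y => q t y i j * pd (fun z => u t z k) y j) x i) +
          (∑ i : Fin d, (b i t x * pd (fun z => u t z k) x i +
            ∑ l : Fin m, Btil i t x k l * pd (fun z => u t z l) x i)) +
          ∑ l : Fin m, C t x k l * u t x l)) t := by have := hrpow.comp t hg; exact this
    have hwfun : (fun τ => w τ x) = (fun τ => ((∑ k, (u τ x k) ^ 2) + ε) ^ (p / 2)) := by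
      funext τ
      rw [hw τ x]
    rw [hwfun, hcompfull.deriv]
  -- rewrite goal
  rw [hwteq, hw t x]
  simp only [EQ1, EQ2]
  rw [EQdt]
  simp only [EQpde]
  -- apply assemble
  have hlam : 0 < lamQ t x := lt_of_lt_of_le hν₀ (hlamQ t ht x).2
  have key := assemble d m hm p σ (ξ t) (lamQ t x) (LamC t x) H ε hp1 hp2 hlam (hξ t ht).le hH hε
    (fun k => u t x k)
    (fun i k => pd (fun z => u t z k) x i)
    (fun i j k => pd (fun y => pd (fun z => u t z k) y j) x i)
    (fun i j => q t x i j)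
    (fun i j => pd (fun y => q t y i j) x i)
    (fun i => b i t x)
    (fun i k l => Btil i t x k l)
    (fun k l => C t x k l)
    (hlamQ t ht x).1.1
    (fun i j => ((hq_symm t ht x).apply j i))
    (fun i k l => hBtil i t ht x k l)
    (hLamC t ht x).1
    (hH_bound t ht x)
  beta_reduce at key
  exact key
end

section
/- Let δ > 0 and c > 0 be real numbers and let s < t. Let v : [s,t] → (0,∞) be continuous on [s,t] and differentiable on (s,t), and assume v′(σ) ≥ c · v(σ)^{1+2/δ} for every σ ∈ (s,t). Then v(s) ≤ (δ/(2c(t−s)))^{δ/2}. -/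
open Set

/-- Nonlinear Gronwall (Nash iteration) lemma: if `v > 0` is continuous
on `[s,t]`, differentiable on `(s,t)`, and `v′(σ) ≥ c v(σ)^{1+2/δ}` there, then
`v s ≤ (δ/(2 c (t−s)))^{δ/2}`. -/
theorem stmt_10 (δ c : ℝ) (hδ : 0 < δ) (hc : 0 < c) (s t : ℝ) (hst : s < t)
    (v v' : ℝ → ℝ) (hv_cont : ContinuousOn v (Icc s t))
    (hv_pos : ∀ σ ∈ Icc s t, 0 < v σ)
    (hv_deriv : ∀ σ ∈ Ioo s t, HasDerivAt v (v' σ) σ)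
    (hv_ineq : ∀ σ ∈ Ioo s t, c * v σ ^ (1 + 2 / δ) ≤ v' σ) :
    v s ≤ (δ / (2 * c * (t - s))) ^ (δ / 2) := by
  set p : ℝ := -(2 / δ) with hp
  set w : ℝ → ℝ := fun σ => v σ ^ p with hw
  set w' : ℝ → ℝ := fun σ => v' σ * p * v σ ^ (p - 1) with hw'
  have hw_cont : ContinuousOn w (Icc s t) :=
    hv_cont.rpow_const fun σ hσ => Or.inl (hv_pos σ hσ).ne'
  have hw_deriv : ∀ σ ∈ Ioo s t, HasDerivAt w (w' σ) σ := fun σ hσ =>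
    (hv_deriv σ hσ).rpow_const (Or.inl (hv_pos σ (Ioo_subset_Icc_self hσ)).ne')
  -- pointwise bound on w'
  have hw'_bound : ∀ σ ∈ Ioo s t, w' σ ≤ -(2 * c / δ) := by
    intro σ hσ
    have hvσ : 0 < v σ := hv_pos σ (Ioo_subset_Icc_self hσ)
    have hpow : (0:ℝ) < v σ ^ (p - 1) := Real.rpow_pos_of_pos hvσ _
    have hpneg : p < 0 := by
      have : 0 < 2 / δ := by positivity
      rw [hp]; linarith
    have h1 : v' σ * p ≤ (c * v σ ^ (1 + 2 / δ)) * p :=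
      mul_le_mul_of_nonpos_right (hv_ineq σ hσ) hpneg.le
    have h2 : w' σ ≤ (c * v σ ^ (1 + 2 / δ)) * p * v σ ^ (p - 1) := by
      rw [hw']
      nlinarith
    refine h2.trans_eq ?_
    have : v σ ^ (1 + 2 / δ) * v σ ^ (p - 1) = 1 := by
      rw [← Real.rpow_add hvσ]
      have : 1 + 2 / δ + (p - 1) = 0 := by rw [hp]; ring
      rw [this, Real.rpow_zero]
    calc c * v σ ^ (1 + 2 / δ) * p * v σ ^ (p - 1)
        = c * p * (v σ ^ (1 + 2 / δ) * v σ ^ (p - 1)) := by ring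
      _ = c * p := by rw [this, mul_one]
      _ = -(2 * c / δ) := by rw [hp]; ring
  -- mean value theorem
  obtain ⟨ξ, hξ, hslope⟩ := exists_hasDerivAt_eq_slope w w' hst hw_cont hw_deriv
  have hwt_pos : 0 < w t := Real.rpow_pos_of_pos (hv_pos t (right_mem_Icc.mpr hst.le)) _
  have hws : 2 * c * (t - s) / δ ≤ w s := by
    have hb := hw'_bound ξ hξ
    rw [hslope] at hb
    have hts : 0 < t - s := sub_pos.mpr hst
    rw [div_le_iff₀ hts] at hb
    have : w t - w s ≤ -(2 * c / δ) * (t - s) := hb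
    have h2cd : 2 * c * (t - s) / δ = 2 * c / δ * (t - s) := by ring
    rw [h2cd]
    nlinarith
  -- conclude
  have hA : (0:ℝ) < 2 * c * (t - s) / δ := by
    have hts : 0 < t - s := sub_pos.mpr hst
    exact div_pos (by nlinarith) hδ
  have hvs : 0 < v s := hv_pos s (left_mem_Icc.mpr hst.le)
  have key : w s ^ (-(δ / 2)) ≤ (2 * c * (t - s) / δ) ^ (-(δ / 2)) :=
    Real.rpow_le_rpow_of_nonpos hA hws (by linarith)
  have hleft : w s ^ (-(δ / 2)) = v s := by
    show (v s ^ p) ^ (-(δ / 2)) = v s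
    rw [← Real.rpow_mul hvs.le]
    have : p * (-(δ / 2)) = 1 := by rw [hp]; field_simp
    rw [this, Real.rpow_one]
  have hright : (2 * c * (t - s) / δ) ^ (-(δ / 2)) = (δ / (2 * c * (t - s))) ^ (δ / 2) := by
    rw [Real.rpow_neg hA.le, ← Real.inv_rpow hA.le]
    congr 1
    field_simp
  rw [hleft, hright] at key
  exact key
end

section
/- Let d, m ≥ 1, let Q be a symmetric positive definite real d×d matrix, let B_1, …, B_d be symmetric real m×m matrices, let ζ ∈ ℝ^m with ζ ≠ 0 and let c = (c_1,…,c_d) ∈ ℝ^d. For ξ = (ξ¹,…,ξ^d) ∈ (ℝ^m)^d define W(ξ) = ∑_{i,j=1}^d Q_{ij} ⟨ξ^i, ξ^j⟩ − ∑_{j=1}^d ⟨B_j ξ^j, ζ⟩. Then for every ξ with ⟨ξ^j, ζ⟩ = c_j for all j = 1,…,d, one has W(ξ) ≥ ⟨Qc, c⟩/|ζ|² − (1/|ζ|²) ∑_{j=1}^d c_j ⟨B_j ζ, ζ⟩ − (1/4) ∑_{i,k=1}^d (Q^{-1})_{ik} [ ⟨B_i ζ, B_k ζ⟩ − ⟨B_i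 ζ, ζ⟩⟨B_k ζ, ζ⟩/|ζ|² ], with equality attained at ξ^j = (c_j/|ζ|²) ζ + (1/2) ∑_{k=1}^d (Q^{-1})_{jk} [ B_k ζ − (⟨B_k ζ, ζ⟩/|ζ|²) ζ ], j = 1,…,d. -/
open scoped BigOperators
open Matrix

private lemma sumdp {ι : Type*} {m : ℕ} (s : Finset ι) (f : ι → Fin m → ℝ) (w : Fin m → ℝ) :
    (∑ i ∈ s, f i) ⬝ᵥ w = ∑ i ∈ s, f i ⬝ᵥ w := by
  simp only [dotProduct, Finset.sum_apply, Finset.sum_mul]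
  exact Finset.sum_comm

/-- Constrained quadratic minimization (Lagrange multiplier computation)
from the proof of Proposition A.1: with `W ξ = ∑_{i,j} Q i j ⟨ξ i, ξ j⟩ − ∑_j ⟨B j (ξ j), ζ⟩`,
among all `ξ` with `⟨ξ j, ζ⟩ = c j`, `W` is bounded below by the stated expression, with
equality at the explicitly given minimizer. -/
theorem stmt_15 (d m : ℕ) (hd : 1 ≤ d) (hm : 1 ≤ m)
    (Q : Matrix (Fin d) (Fin d) ℝ) (hQ : Q.PosDef)
    (B : Fin d → Matrix (Fin m) (Fin m) ℝ) (hB : ∀ j, (B j).IsSymm)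
    (ζ : Fin m → ℝ) (hζ : ζ ≠ 0) (c : Fin d → ℝ)
    (W : (Fin d → Fin m → ℝ) → ℝ)
    (hW : ∀ ξ : Fin d → Fin m → ℝ,
      W ξ = (∑ i : Fin d, ∑ j : Fin d, Q i j * (∑ k : Fin m, ξ i k * ξ j k)) -
        ∑ j : Fin d, ∑ k : Fin m, (∑ l : Fin m, B j k l * ξ j l) * ζ k)
    (R : ℝ)
    (hR : R = (∑ i : Fin d, ∑ j : Fin d, Q i j * c i * c j) / (∑ k : Fin m, (ζ k) ^ 2) -
        (1 / (∑ k : Fin m, (ζ k) ^ 2)) *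
          (∑ j : Fin d, c j * (∑ k : Fin m, (∑ l : Fin m, B j k l * ζ l) * ζ k)) -
        (1 / 4) * ∑ i : Fin d, ∑ k : Fin d, (Q⁻¹) i k *
          ((∑ r : Fin m, (∑ l : Fin m, B i r l * ζ l) * (∑ l : Fin m, B k r l * ζ l)) -
            (∑ r : Fin m, (∑ l : Fin m, B i r l * ζ l) * ζ r) *
              (∑ r : Fin m, (∑ l : Fin m, B k r l * ζ l) * ζ r) /
                (∑ r : Fin m, (ζ r) ^ 2)))
    (ξ₀ : Fin d → Fin m → ℝ)
    (hξ₀ : ∀ j : Fin d, ξ₀ j = fun r : Fin m =>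
      c j / (∑ k : Fin m, (ζ k) ^ 2) * ζ r +
        (1 / 2) * ∑ k : Fin d, (Q⁻¹) j k *
          ((∑ l : Fin m, B k r l * ζ l) -
            (∑ l : Fin m, (∑ l' : Fin m, B k l l' * ζ l') * ζ l) /
              (∑ l : Fin m, (ζ l) ^ 2) * ζ r)) :
    (∀ ξ : Fin d → Fin m → ℝ,
        (∀ j : Fin d, (∑ k : Fin m, ξ j k * ζ k) = c j) → R ≤ W ξ) ∧
      (∀ j : Fin d, (∑ k : Fin m, ξ₀ j k * ζ k) = c j) ∧ W ξ₀ = R := by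
  classical
  -- basic notation
  set S : ℝ := ∑ k : Fin m, (ζ k) ^ 2 with hSdef
  have hSζ : ζ ⬝ᵥ ζ = S := by simp [hSdef, dotProduct, sq]
  have hSpos : 0 < S := by
    have h2 : (0:ℝ) ≤ S := Finset.sum_nonneg fun k _ => sq_nonneg _
    rcases h2.lt_or_eq with h' | h'
    · exact h'
    · exfalso; apply hζ; funext k
      have := (Finset.sum_eq_zero_iff_of_nonneg (fun k _ => sq_nonneg (ζ k))).mp h'.symm k
        (Finset.mem_univ k)
      exact pow_eq_zero_iff two_ne_zero |>.mp this
  have hSne : S ≠ 0 := hSpos.ne'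
  set b : Fin d → Fin m → ℝ := fun j => (B j) *ᵥ ζ with hbdef
  have hbr : ∀ j r, b j r = ∑ l, B j r l * ζ l := by
    intro j r; simp [hbdef, Matrix.mulVec, dotProduct]
  have hβ : ∀ j, b j ⬝ᵥ ζ = ∑ r, (∑ l, B j r l * ζ l) * ζ r := by
    intro j; simp [dotProduct, hbr]
  set β : Fin d → ℝ := fun j => b j ⬝ᵥ ζ with hβdef
  set lam : Fin d → ℝ := fun j => (2 * (∑ i, Q i j * c i) - β j) / S with hlamdef
  -- symmetry facts
  have hQs : ∀ i j, Q i j = Q j i := by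
    intro i j
    have h := hQ.isHermitian
    conv_rhs => rw [← h]
    simp [Matrix.conjTranspose_apply]
  have hinv : ∀ j k, ∑ i, Q j i * Q⁻¹ i k = if j = k then 1 else 0 := by
    intro j k
    have h := congrFun (congrFun (Matrix.mul_nonsing_inv Q hQ.det_pos.ne'.isUnit) j) k
    simpa [Matrix.mul_apply, Matrix.one_apply] using h
  have hBsymm : ∀ j k l, B j k l = B j l k := by
    intro j k l
    have h := hB j
    conv_rhs => rw [← h]
    simp [Matrix.transpose_apply]
  -- W in dot-product form
  have hBdot : ∀ (j : Fin d) (v : Fin m → ℝ),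
      ∑ k, (∑ l, B j k l * v l) * ζ k = v ⬝ᵥ b j := by
    intro j v
    calc ∑ k, (∑ l, B j k l * v l) * ζ k
        = ∑ k, ∑ l, B j k l * v l * ζ k := by
          exact Finset.sum_congr rfl fun k _ => Finset.sum_mul _ _ _
      _ = ∑ l, ∑ k, B j k l * v l * ζ k := Finset.sum_comm
      _ = ∑ l, v l * b j l := by
          refine Finset.sum_congr rfl fun l _ => ?_
          rw [hbr, Finset.mul_sum]
          refine Finset.sum_congr rfl fun k _ => ?_
          rw [hBsymm j k l]; ring
      _ = v ⬝ᵥ b j := rfl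
  have hWd : ∀ ξ : Fin d → Fin m → ℝ,
      W ξ = (∑ i, ∑ j, Q i j * (ξ i ⬝ᵥ ξ j)) - ∑ j, ξ j ⬝ᵥ b j := by
    intro ξ
    rw [hW ξ]
    congr 1
    exact Finset.sum_congr rfl fun j _ => hBdot j (ξ j)
  -- ξ₀ in vector form
  have hξ₀d : ∀ j, ξ₀ j =
      (c j / S) • ζ + (2⁻¹ : ℝ) • ∑ k, Q⁻¹ j k • (b k - (β k / S) • ζ) := by
    intro j
    funext r
    rw [hξ₀ j]
    simp only [Pi.add_apply, Pi.smul_apply, Finset.sum_apply, Pi.sub_apply, smul_eq_mul,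
      hβdef, hβ, hbr]
    norm_num
  -- constraint for ξ₀
  have hcon : ∀ j, ξ₀ j ⬝ᵥ ζ = c j := by
    intro j
    rw [hξ₀d j]
    rw [add_dotProduct, smul_dotProduct, smul_dotProduct, sumdp]
    rw [hSζ]
    have : ∀ k : Fin d, (Q⁻¹ j k • (b k - (β k / S) • ζ)) ⬝ᵥ ζ = 0 := by
      intro k
      rw [smul_dotProduct, sub_dotProduct, smul_dotProduct, hSζ]
      show Q⁻¹ j k * (b k ⬝ᵥ ζ - (b k ⬝ᵥ ζ / S) * S) = 0
      rw [div_mul_cancel₀ _ hSne, sub_self, mul_zero]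
    rw [Finset.sum_congr rfl fun k _ => this k]
    simp [hSne]
  have hpt : ∀ (i : Fin d) (r : Fin m), ξ₀ i r =
      c i / S * ζ r + 2⁻¹ * ∑ k, Q⁻¹ i k * (b k r - β k / S * ζ r) := by
    intro i r
    rw [hξ₀d i]
    simp [Finset.sum_apply, smul_eq_mul]
  have hgrad : ∀ j, ∑ i, Q i j • ξ₀ i = (2⁻¹ : ℝ) • (b j + lam j • ζ) := by
    intro j
    funext r
    simp only [Finset.sum_apply, Pi.smul_apply, Pi.add_apply, smul_eq_mul]
    calc ∑ i, Q i j * ξ₀ i r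
        = ∑ i, (Q i j * (c i / S * ζ r) + 2⁻¹ * ∑ k, Q i j * (Q⁻¹ i k * (b k r - β k / S * ζ r))) := by
          refine Finset.sum_congr rfl fun i _ => ?_
          rw [hpt i r, mul_add, Finset.mul_sum, Finset.mul_sum]
          congr 1
          rw [Finset.mul_sum]
          refine Finset.sum_congr rfl fun k _ => by ring
      _ = (∑ i, Q i j * (c i / S * ζ r))
            + 2⁻¹ * ∑ i, ∑ k, Q i j * (Q⁻¹ i k * (b k r - β k / S * ζ r)) := by
          rw [Finset.sum_add_distrib, ← Finset.mul_sum]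
      _ = (∑ i, Q i j * c i) * (ζ r / S)
            + 2⁻¹ * ∑ k, (∑ i, Q j i * Q⁻¹ i k) * (b k r - β k / S * ζ r) := by
          congr 1
          · rw [Finset.sum_mul]
            exact Finset.sum_congr rfl fun i _ => by ring
          · congr 1
            rw [Finset.sum_comm]
            refine Finset.sum_congr rfl fun k _ => ?_
            rw [Finset.sum_mul]
            refine Finset.sum_congr rfl fun i _ => by rw [hQs i j]; ring
      _ = (∑ i, Q i j * c i) * (ζ r / S) + 2⁻¹ * (b j r - β j / S * ζ r) := by
          congr 1
          congr 1
          rw [Finset.sum_congr rfl fun k _ => by rw [hinv j k]]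
          simp
      _ = 2⁻¹ * (b j r + lam j * ζ r) := by
          rw [hlamdef]
          field_simp
          ring
  have hmain : ∀ ξ : Fin d → Fin m → ℝ, (∀ j, ξ j ⬝ᵥ ζ = c j) →
      W ξ = W ξ₀ + ∑ i, ∑ j, Q i j * ((ξ i - ξ₀ i) ⬝ᵥ (ξ j - ξ₀ j)) := by
    intro ξ hc
    set η : Fin d → Fin m → ℝ := fun j => ξ j - ξ₀ j with hηdef
    have hξsplit : ∀ j, ξ j = ξ₀ j + η j := by
      intro j; funext r; simp [hηdef]
    have hηζ : ∀ j, η j ⬝ᵥ ζ = 0 := by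
      intro j; rw [hηdef]; simp only [sub_dotProduct, hc j, hcon j, sub_self]
    have hcross : ∀ j, (∑ i, Q i j • ξ₀ i) ⬝ᵥ η j = 2⁻¹ * (b j ⬝ᵥ η j) := by
      intro j
      rw [hgrad j, smul_dotProduct, add_dotProduct, smul_dotProduct,
        dotProduct_comm ζ (η j), hηζ j]
      simp
    have hcross1 : ∑ i, ∑ j, Q i j * (ξ₀ i ⬝ᵥ η j) = ∑ j, 2⁻¹ * (b j ⬝ᵥ η j) := by
      rw [Finset.sum_comm]
      refine Finset.sum_congr rfl fun j _ => ?_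
      rw [← hcross j, sumdp]
      exact Finset.sum_congr rfl fun i _ => by rw [smul_dotProduct]; simp
    have hcross2 : ∑ i, ∑ j, Q i j * (η i ⬝ᵥ ξ₀ j) = ∑ i, 2⁻¹ * (b i ⬝ᵥ η i) := by
      refine Finset.sum_congr rfl fun i _ => ?_
      rw [← hcross i, sumdp]
      refine Finset.sum_congr rfl fun j _ => ?_
      rw [smul_dotProduct, dotProduct_comm (ξ₀ j) (η i), hQs j i]
      simp
    have hbig : ∑ i, ∑ j, Q i j * (ξ i ⬝ᵥ ξ j)
        = ∑ i, ∑ j, Q i j * (ξ₀ i ⬝ᵥ ξ₀ j)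
          + (∑ i, ∑ j, Q i j * (ξ₀ i ⬝ᵥ η j))
          + (∑ i, ∑ j, Q i j * (η i ⬝ᵥ ξ₀ j))
          + ∑ i, ∑ j, Q i j * (η i ⬝ᵥ η j) := by
      rw [← Finset.sum_add_distrib, ← Finset.sum_add_distrib, ← Finset.sum_add_distrib]
      refine Finset.sum_congr rfl fun i _ => ?_
      rw [← Finset.sum_add_distrib, ← Finset.sum_add_distrib, ← Finset.sum_add_distrib]
      refine Finset.sum_congr rfl fun j _ => ?_
      rw [hξsplit i, hξsplit j, add_dotProduct, dotProduct_add, dotProduct_add]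
      ring
    have hlin : ∑ j, ξ j ⬝ᵥ b j = (∑ j, ξ₀ j ⬝ᵥ b j) + ∑ j, η j ⬝ᵥ b j := by
      rw [← Finset.sum_add_distrib]
      refine Finset.sum_congr rfl fun j _ => ?_
      rw [hξsplit j, add_dotProduct]
    have hηb : ∀ j, η j ⬝ᵥ b j = b j ⬝ᵥ η j := fun j => dotProduct_comm _ _
    rw [hWd ξ, hWd ξ₀, hbig, hlin, hcross1, hcross2]
    have : ∑ j, η j ⬝ᵥ b j = ∑ j, 2⁻¹ * (b j ⬝ᵥ η j) + ∑ i, 2⁻¹ * (b i ⬝ᵥ η i) := by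
      rw [← Finset.sum_add_distrib]
      exact Finset.sum_congr rfl fun j _ => by rw [hηb j]; ring
    rw [this]
    ring
  have hval : W ξ₀ = R := by
    have hbb : ∀ i k : Fin d,
        (∑ r, (∑ l, B i r l * ζ l) * (∑ l, B k r l * ζ l)) = b i ⬝ᵥ b k := by
      intro i k; simp [dotProduct, hbr]
    have hβraw : ∀ j : Fin d, (∑ r, (∑ l, B j r l * ζ l) * ζ r) = β j := by
      intro j; rw [hβdef]; exact (hβ j).symm
    set T1 : ℝ := ∑ j, (∑ i, Q i j * c i) * c j with hT1
    set T2 : ℝ := ∑ j, β j * c j with hT2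
    set T3 : ℝ := ∑ j, ∑ k, Q⁻¹ j k * (b k ⬝ᵥ b j - β k * β j / S) with hT3
    have hR' : R = T1 / S - T2 / S - 4⁻¹ * T3 := by
      rw [hR]
      have e1 : ∑ i, ∑ j, Q i j * c i * c j = T1 := by
        rw [hT1, Finset.sum_comm]
        exact Finset.sum_congr rfl fun j _ => (Finset.sum_mul _ _ _).symm
      have e2 : ∑ j, c j * (∑ k, (∑ l, B j k l * ζ l) * ζ k) = T2 := by
        rw [hT2]
        exact Finset.sum_congr rfl fun j _ => by rw [hβraw j]; ring
      have e3 : (∑ i, ∑ k, Q⁻¹ i k *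
          ((∑ r, (∑ l, B i r l * ζ l) * (∑ l, B k r l * ζ l)) -
            (∑ r, (∑ l, B i r l * ζ l) * ζ r) * (∑ r, (∑ l, B k r l * ζ l) * ζ r) / S)) = T3 := by
        rw [hT3]
        refine Finset.sum_congr rfl fun j _ => Finset.sum_congr rfl fun k _ => ?_
        rw [hbb j k, hβraw j, hβraw k, dotProduct_comm (b j) (b k)]
        ring
      rw [e1, e2, e3]
      ring
    have hfirst : ∑ i, ∑ j, Q i j * (ξ₀ i ⬝ᵥ ξ₀ j)
        = ∑ j, 2⁻¹ * (ξ₀ j ⬝ᵥ b j + lam j * c j) := by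
      rw [Finset.sum_comm]
      refine Finset.sum_congr rfl fun j _ => ?_
      have : ∑ i, Q i j * (ξ₀ i ⬝ᵥ ξ₀ j) = (∑ i, Q i j • ξ₀ i) ⬝ᵥ ξ₀ j := by
        rw [sumdp]
        exact Finset.sum_congr rfl fun i _ => by rw [smul_dotProduct]; simp
      rw [this, hgrad j, smul_dotProduct, add_dotProduct, smul_dotProduct,
        dotProduct_comm ζ (ξ₀ j), hcon j, dotProduct_comm (b j) (ξ₀ j)]
      simp
    have hD : ∀ j, ξ₀ j ⬝ᵥ b j
        = c j / S * β j + 2⁻¹ * ∑ k, Q⁻¹ j k * (b k ⬝ᵥ b j - β k * β j / S) := by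
      intro j
      rw [hξ₀d j, add_dotProduct, smul_dotProduct, smul_dotProduct, sumdp]
      have hζb : ζ ⬝ᵥ b j = β j := by
        show ζ ⬝ᵥ b j = b j ⬝ᵥ ζ
        exact dotProduct_comm ζ (b j)
      rw [hζb]
      have hterm : ∀ k : Fin d, (Q⁻¹ j k • (b k - (β k / S) • ζ)) ⬝ᵥ b j
          = Q⁻¹ j k * (b k ⬝ᵥ b j - β k * β j / S) := by
        intro k
        rw [smul_dotProduct, sub_dotProduct, smul_dotProduct, hζb]
        simp only [smul_eq_mul]
        ring
      rw [Finset.sum_congr rfl fun k _ => hterm k]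
      simp only [smul_eq_mul]
    rw [hWd ξ₀, hfirst, hR']
    calc (∑ j, 2⁻¹ * (ξ₀ j ⬝ᵥ b j + lam j * c j)) - ∑ j, ξ₀ j ⬝ᵥ b j
        = ∑ j, (2⁻¹ * (ξ₀ j ⬝ᵥ b j + lam j * c j) - ξ₀ j ⬝ᵥ b j) := by
          rw [Finset.sum_sub_distrib]
      _ = ∑ j, ((∑ i, Q i j * c i) * c j / S - β j * c j / S
            - 4⁻¹ * ∑ k, Q⁻¹ j k * (b k ⬝ᵥ b j - β k * β j / S)) := by
          refine Finset.sum_congr rfl fun j _ => ?_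
          rw [hD j]
          simp only [hlamdef]
          set A := ∑ i, Q i j * c i with hA
          set E := ∑ k, Q⁻¹ j k * (b k ⬝ᵥ b j - β k * β j / S) with hE
          field_simp <;> ring
      _ = T1 / S - T2 / S - 4⁻¹ * T3 := by
          rw [Finset.sum_sub_distrib, Finset.sum_sub_distrib, ← Finset.sum_div, ← Finset.sum_div,
            ← Finset.mul_sum, hT1, hT2, hT3]
  -- nonnegativity of the quadratic remainder
  have hquad : ∀ η : Fin d → Fin m → ℝ,
      0 ≤ ∑ i, ∑ j, Q i j * (η i ⬝ᵥ η j) := by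
    intro η
    have key : ∑ i, ∑ j, Q i j * (η i ⬝ᵥ η j)
        = ∑ r : Fin m, (fun i => η i r) ⬝ᵥ (Q *ᵥ fun i => η i r) := by
      calc ∑ i, ∑ j, Q i j * (η i ⬝ᵥ η j)
          = ∑ i, ∑ r, ∑ j, Q i j * (η i r * η j r) := by
            refine Finset.sum_congr rfl fun i _ => ?_
            have h1 : ∑ j, Q i j * (η i ⬝ᵥ η j) = ∑ j, ∑ r, Q i j * (η i r * η j r) := by
              refine Finset.sum_congr rfl fun j _ => ?_
              rw [dotProduct, Finset.mul_sum]
            rw [h1]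
            exact Finset.sum_comm
        _ = ∑ r, ∑ i, ∑ j, Q i j * (η i r * η j r) := Finset.sum_comm
        _ = ∑ r : Fin m, (fun i => η i r) ⬝ᵥ (Q *ᵥ fun i => η i r) := by
            refine Finset.sum_congr rfl fun r _ => ?_
            simp only [dotProduct, mulVec, Finset.mul_sum]
            refine Finset.sum_congr rfl fun i _ => ?_
            exact Finset.sum_congr rfl fun j _ => by ring
    rw [key]
    refine Finset.sum_nonneg fun r _ => ?_
    have h := hQ.posSemidef.dotProduct_mulVec_nonneg (fun i => η i r)
    simpa using h
  refine ⟨?_, ?_, hval⟩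
  · intro ξ hc
    have hc' : ∀ j, ξ j ⬝ᵥ ζ = c j := fun j => (hc j)
    rw [hmain ξ hc', ← hval]
    nlinarith [hquad (fun j => ξ j - ξ₀ j)]
  · intro j; exact hcon j
end
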